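/- The generating functions H_b satisfy H_b(x) = (x^b/(1−x^b)) · (Σ_{i=1}^{b−1} (2(b−i)+1) H_i(x) + 1) for all b ≥ 1. -/

import Mathlib

/-!
Splitting off the term `i = b` (coefficient 1) of the recurrence, and absorbing the initial
value `h_b(b) = 1`, gives `h_b(m + b) = h_b(m) + g_b(m)` with
`g_b(m) = Σ_{i<b} (2(b-i)+1) h_i(m) + [m = 0]`, while `h_b(n) = 0` for `n < b`.
On generating functions this says `H_b (1 - x^b) = x^b G_b`, and `1 - x^b` is invertible.
-/

/-- `hFun b n` is the number of `(n,b)`-domino stacks, defined by the recurrence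
`h_b(n) = Σ_{i=1}^{b} (2(b-i)+1) h_i(n-b)` with `h_b(b) = 1` and `h_b(n) = 0`
when `n < 1`, `b < 1`, or `n < b`. -/
def hFun : ℕ → ℕ → ℕ
  | b, n =>
    if b = 0 ∨ n ≤ b then (if n = b ∧ 1 ≤ b then 1 else 0)
    else ∑ i ∈ Finset.Icc 1 b, (2 * (b - i) + 1) * hFun i (n - b)
termination_by b n => n
decreasing_by omega

theorem hFun_zero_right (b : ℕ) : hFun b 0 = 0 := by
  rw [hFun]
  grind

theorem hFun_of_lt {b n : ℕ} (h : n < b) : hFun b n = 0 := by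
  rw [hFun]
  grind

theorem hFun_self {b : ℕ} (hb : 1 ≤ b) : hFun b b = 1 := by
  rw [hFun]
  grind

theorem hFun_add_self {b : ℕ} (hb : 1 ≤ b) (m : ℕ) :
    hFun b (m + b) = hFun b m +
      (∑ i ∈ Finset.Icc 1 (b - 1), (2 * (b - i) + 1) * hFun i m + if m = 0 then 1 else 0) := by
  rcases Nat.eq_zero_or_pos m with rfl | hm
  · simp [hFun_self hb, hFun_zero_right]
  · obtain ⟨c, rfl⟩ : ∃ c, b = c + 1 := ⟨b - 1, by omega⟩
    rw [hFun, if_neg (by omega), Nat.add_sub_cancel, Finset.sum_Icc_succ_top (by omega),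
      if_neg hm.ne']
    simp only [Nat.add_sub_cancel, Nat.sub_self]
    ring

namespace PowerSeries

theorem mk_mul_one_sub_X_pow {R : Type*} [Ring R] {b : ℕ} {f g : ℕ → R}
    (hlt : ∀ n < b, f n = 0) (hrec : ∀ m, f (m + b) = f m + g m) :
    mk f * (1 - X ^ b) = X ^ b * mk g := by
  ext n
  rw [mul_sub, mul_one, map_sub, coeff_mul_X_pow', coeff_X_pow_mul']
  split_ifs with h
  · obtain ⟨m, rfl⟩ := Nat.exists_eq_add_of_le' h
    simp [hrec]
  · simp [hlt n (by omega)]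

theorem coeff_natCast_mul {R : Type*} [Semiring R] (n m : ℕ) (φ : R⟦X⟧) :
    coeff m ((n : R⟦X⟧) * φ) = n * coeff m φ := by
  rw [← map_natCast C, coeff_C_mul]

theorem mk_eq_X_pow_mul_inv_mul {k : Type*} [Field k] {b : ℕ} (hb : b ≠ 0) {f g : ℕ → k}
    (hlt : ∀ n < b, f n = 0) (hrec : ∀ m, f (m + b) = f m + g m) :
    mk f = X ^ b * (1 - X ^ b)⁻¹ * mk g := by
  rw [mul_right_comm, eq_mul_inv_iff_mul_eq (by simp [hb]), mk_mul_one_sub_X_pow hlt hrec]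

end PowerSeries

open PowerSeries in
/-- The generating functions `H_b(x) = Σ_{n≥0} h_b(n) xⁿ` satisfy
`H_b(x) = (x^b/(1-x^b)) (Σ_{i=1}^{b-1} (2(b-i)+1) H_i(x) + 1)` for all `b ≥ 1`. -/
theorem domino_stack_genFun_eq (b : ℕ) (hb : 1 ≤ b) :
    PowerSeries.mk (fun n => (hFun b n : ℚ)) =
      (X : PowerSeries ℚ) ^ b * (1 - (X : PowerSeries ℚ) ^ b)⁻¹ *
        ((∑ i ∈ Finset.Icc 1 (b - 1),
          ((2 * (b - i) + 1 : ℕ) : PowerSeries ℚ) * PowerSeries.mk (fun n => (hFun i n : ℚ))) + 1) := by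
  have hsum : (∑ i ∈ Finset.Icc 1 (b - 1),
      ((2 * (b - i) + 1 : ℕ) : PowerSeries ℚ) * mk (fun n => (hFun i n : ℚ))) + 1 =
      mk fun m => ((∑ i ∈ Finset.Icc 1 (b - 1), (2 * (b - i) + 1) * hFun i m
        + if m = 0 then 1 else 0 : ℕ) : ℚ) := by
    ext m
    simp only [map_add, map_sum, coeff_natCast_mul, coeff_one, coeff_mk]
    push_cast
    rfl
  rw [hsum]
  refine mk_eq_X_pow_mul_inv_mul (by omega) (fun n hn => by simp [hFun_of_lt hn]) fun m => ?_
  rw [hFun_add_self hb, Nat.cast_add]
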